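/- Let Σ be a finite alphabet and let Φ₂ be the universal Horn sentence over τ₂ constructed from Σ. Let φ(x̄) be a conjunction of atomic (τ₂ \ {Q})-formulas. Then Φ₂ ⊨ ∀x̄ (φ(x̄) ⇒ ⊥) if and only if there exist n ∈ ℕ, n ≥ 1, and a₁,…,aₙ ∈ Σ such that φ has a subformula of the form I(y₂) ∧ R_{a₁}(y₂,x₁) ∧ P(x₁,…,xₙ) ∧ T(xₙ) ∧ ⋀_{i∈[n−1]} R_{a_{i+1}}(x_i,x_{i+1}). -/
import Mathlib


open FirstOrder Language CategoryTheory

namespace AmalgamationHard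

/-- An atomic formula `R(args)` over a relational language `L` with variables from `V`
(equality atoms are not permitted). -/
structure RelAtom (L : FirstOrder.Language.{0, 0}) (V : Type) where
  n : ℕ
  R : L.Relations n
  args : Fin n → V

variable {L : FirstOrder.Language.{0, 0}}

/-- Realization of an atomic formula in a structure under an assignment of the variables. -/
def RelAtom.Realize {V M : Type} [L.Structure M] (a : RelAtom L V) (v : V → M) : Prop :=
  Structure.RelMap a.R (v ∘ a.args)

/-- A Horn clause: a finite conjunction of atoms (the premise) implying either an atom or
`⊥` (conclusion `none` codes `⊥`). -/
structure HornClause (L : FirstOrder.Language.{0, 0}) (V : Type) where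
  prem : List (RelAtom L V)
  concl : Option (RelAtom L V)

/-- Realization of a Horn clause under an assignment. -/
def HornClause.Realize {V M : Type} [L.Structure M] (c : HornClause L V) (v : V → M) : Prop :=
  (∀ a ∈ c.prem, a.Realize v) → c.concl.elim False (fun a => a.Realize v)

/-- A structure satisfies a universal Horn sentence (coded as a set of Horn clauses,
with all variables universally quantified) if every clause holds under every assignment. -/
def Satisfies (Φ : Set (HornClause L ℕ)) (M : Type) [L.Structure M] : Prop :=
  ∀ c ∈ Φ, ∀ v : ℕ → M, c.Realize v

/-- `Entails Φ prem concl` : the universal Horn sentence `Φ` semantically entails the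
universally quantified Horn clause with premise `prem` and conclusion `concl`
(`none` codes `⊥`). -/
def Entails (Φ : Set (HornClause L ℕ)) {V : Type}
    (prem : List (RelAtom L V)) (concl : Option (RelAtom L V)) : Prop :=
  ∀ (M : Type) [L.Structure M], Satisfies Φ M → ∀ v : V → M,
    (∀ a ∈ prem, a.Realize v) → concl.elim False (fun a => a.Realize v)


/-- The relation symbols of the signature `τ₂`: unary `I` and `T`, binary `E` and `F`,
a binary `R a` for every `a ∈ Σ`, and a ternary `Q`. -/
inductive Sig2 (A : Type) : ℕ → Type
  | I : Sig2 A 1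
  | T : Sig2 A 1
  | E : Sig2 A 2
  | F : Sig2 A 2
  | R : A → Sig2 A 2
  | Q : Sig2 A 3

/-- The relational signature `τ₂`. -/
def L2 (A : Type) : FirstOrder.Language.{0, 0} :=
  ⟨fun _ => Empty, Sig2 A⟩

variable {A : Type}

def atomI2 (u : ℕ) : RelAtom (L2 A) ℕ := ⟨1, Sig2.I, fun _ => u⟩
def atomT2 (u : ℕ) : RelAtom (L2 A) ℕ := ⟨1, Sig2.T, fun _ => u⟩
def atomE2 (u v : ℕ) : RelAtom (L2 A) ℕ := ⟨2, Sig2.E, ![u, v]⟩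
def atomF2 (u v : ℕ) : RelAtom (L2 A) ℕ := ⟨2, Sig2.F, ![u, v]⟩
def atomR2 (a : A) (u v : ℕ) : RelAtom (L2 A) ℕ := ⟨2, Sig2.R a, ![u, v]⟩
def atomQ2 (u v w : ℕ) : RelAtom (L2 A) ℕ := ⟨3, Sig2.Q, ![u, v, w]⟩

/-- The universal Horn sentence `Φ₂` constructed from the alphabet `Σ`.
Variables: `0` codes `y₁`, `1` codes `y₂`, and `2`, `3` code `x_i, x_{i+1}` (resp. `x₁`,
resp. `xₙ`). `P(…)` unfolds to the `F(y₁,·)`- and `E(y₂,·)`-atoms. -/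
def Phi2 (A : Type) : Set (HornClause (L2 A) ℕ) :=
  { c | (∃ a : A,
          c = ⟨[atomI2 1, atomR2 a 1 2, atomF2 0 2, atomE2 1 2], some (atomQ2 0 1 2)⟩
        ∨ c = ⟨[atomI2 1, atomQ2 0 1 2, atomR2 a 2 3, atomF2 0 2, atomF2 0 3,
                atomE2 1 2, atomE2 1 3], some (atomQ2 0 1 3)⟩)
      ∨ c = ⟨[atomI2 1, atomQ2 0 1 2, atomT2 2, atomF2 0 2, atomE2 1 2], none⟩ }

section Claim2Aux

/-- The least ternary relation closed under the `Q`-clauses of `Φ₂`, over the atoms of `φ`. -/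
inductive Qrel (φ : List (RelAtom (L2 A) ℕ)) : ℕ → ℕ → ℕ → Prop
  | base (a : A) (y₁ y₂ x : ℕ) :
      atomI2 y₂ ∈ φ → atomR2 a y₂ x ∈ φ → atomF2 y₁ x ∈ φ → atomE2 y₂ x ∈ φ →
      Qrel φ y₁ y₂ x
  | step (a : A) (y₁ y₂ x x' : ℕ) :
      Qrel φ y₁ y₂ x → atomI2 y₂ ∈ φ → atomR2 a x x' ∈ φ →
      atomF2 y₁ x ∈ φ → atomF2 y₁ x' ∈ φ → atomE2 y₂ x ∈ φ → atomE2 y₂ x' ∈ φ →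
      Qrel φ y₁ y₂ x'

/-- Interpretation of the relation symbols in the canonical structure on `ℕ`. -/
def relInterp (φ : List (RelAtom (L2 A) ℕ)) : ∀ {n}, Sig2 A n → (Fin n → ℕ) → Prop
  | _, .I, args => atomI2 (args 0) ∈ φ
  | _, .T, args => atomT2 (args 0) ∈ φ
  | _, .E, args => atomE2 (args 0) (args 1) ∈ φ
  | _, .F, args => atomF2 (args 0) (args 1) ∈ φ
  | _, .R a, args => atomR2 a (args 0) (args 1) ∈ φ
  | _, .Q, args => Qrel φ (args 0) (args 1) (args 2)

/-- The canonical structure on `ℕ` determined by `φ`. -/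
def st (φ : List (RelAtom (L2 A) ℕ)) : (L2 A).Structure ℕ :=
  ⟨fun e _ => e.elim, fun r args => relInterp φ r args⟩

lemma realize_st (φ : List (RelAtom (L2 A) ℕ)) (at' : RelAtom (L2 A) ℕ) (v : ℕ → ℕ) :
    @RelAtom.Realize (L2 A) ℕ ℕ (st φ) at' v ↔ relInterp φ at'.R (v ∘ at'.args) :=
  Iff.rfl

lemma Qrel.extract {φ : List (RelAtom (L2 A) ℕ)} {y₁ y₂ z : ℕ} (h : Qrel φ y₁ y₂ z) :
    ∃ (n : ℕ) (a : Fin (n + 1) → A) (x : Fin (n + 1) → ℕ),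
      x (Fin.last n) = z ∧
      atomR2 (a 0) y₂ (x 0) ∈ φ ∧
      (∀ i, atomF2 y₁ (x i) ∈ φ) ∧
      (∀ i, atomE2 y₂ (x i) ∈ φ) ∧
      (∀ i : Fin n, atomR2 (a i.succ) (x i.castSucc) (x i.succ) ∈ φ) := by
  induction h with
  | base a y₁ y₂ x hI hR hF hE =>
      exact ⟨0, fun _ => a, fun _ => x, rfl, hR, fun _ => hF, fun _ => hE, fun i => i.elim0⟩
  | step a y₁ y₂ xm x' hQ hI hR hFm hF' hEm hE' ih =>
      obtain ⟨n, as, xs, hlast, hR0, hFs, hEs, hchain⟩ := ih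
      refine ⟨n + 1, Fin.snoc as a, Fin.snoc xs x', Fin.snoc_last .., ?_, ?_, ?_, ?_⟩
      · rw [show (0 : Fin (n + 2)) = (0 : Fin (n + 1)).castSucc by simp]
        simp only [Fin.snoc_castSucc]
        exact hR0
      · intro i
        refine Fin.lastCases ?_ (fun j => ?_) i
        · rw [Fin.snoc_last]; exact hF'
        · rw [Fin.snoc_castSucc]; exact hFs j
      · intro i
        refine Fin.lastCases ?_ (fun j => ?_) i
        · rw [Fin.snoc_last]; exact hE'
        · rw [Fin.snoc_castSucc]; exact hEs j
      · intro i
        refine Fin.lastCases ?_ (fun j => ?_) i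
        · rw [Fin.succ_last, Fin.snoc_last, Fin.snoc_last, Fin.snoc_castSucc, hlast]
          exact hR
        · rw [Fin.succ_castSucc, Fin.snoc_castSucc, Fin.snoc_castSucc, Fin.snoc_castSucc]
          exact hchain j

lemma realize_self {φ : List (RelAtom (L2 A) ℕ)}
    (hφ : ∀ at' ∈ φ, ∀ args : Fin 3 → ℕ, at' ≠ ⟨3, Sig2.Q, args⟩) :
    ∀ at' ∈ φ, @RelAtom.Realize (L2 A) ℕ ℕ (st φ) at' id := by
  intro at' h
  obtain ⟨n, r, args⟩ := at'
  cases r with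
  | I =>
      show atomI2 (args 0) ∈ φ
      have e : (fun _ : Fin 1 => args 0) = args := funext fun i => by
        rw [Subsingleton.elim i 0]
      have e' : (atomI2 (args 0) : RelAtom (L2 A) ℕ) = ⟨1, Sig2.I, args⟩ :=
        congrArg (fun f => (⟨1, Sig2.I, f⟩ : RelAtom (L2 A) ℕ)) e
      rw [e']; exact h
  | T =>
      show atomT2 (args 0) ∈ φ
      have e : (fun _ : Fin 1 => args 0) = args := funext fun i => by
        rw [Subsingleton.elim i 0]
      have e' : (atomT2 (args 0) : RelAtom (L2 A) ℕ) = ⟨1, Sig2.T, args⟩ :=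
        congrArg (fun f => (⟨1, Sig2.T, f⟩ : RelAtom (L2 A) ℕ)) e
      rw [e']; exact h
  | E =>
      show atomE2 (args 0) (args 1) ∈ φ
      have e : ![args 0, args 1] = args := funext fun i => by fin_cases i <;> rfl
      have e' : (atomE2 (args 0) (args 1) : RelAtom (L2 A) ℕ) = ⟨2, Sig2.E, args⟩ :=
        congrArg (fun f => (⟨2, Sig2.E, f⟩ : RelAtom (L2 A) ℕ)) e
      rw [e']; exact h
  | F =>
      show atomF2 (args 0) (args 1) ∈ φ
      have e : ![args 0, args 1] = args := funext fun i => by fin_cases i <;> rfl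
      have e' : (atomF2 (args 0) (args 1) : RelAtom (L2 A) ℕ) = ⟨2, Sig2.F, args⟩ :=
        congrArg (fun f => (⟨2, Sig2.F, f⟩ : RelAtom (L2 A) ℕ)) e
      rw [e']; exact h
  | R a =>
      show atomR2 a (args 0) (args 1) ∈ φ
      have e : ![args 0, args 1] = args := funext fun i => by fin_cases i <;> rfl
      have e' : (atomR2 a (args 0) (args 1) : RelAtom (L2 A) ℕ) = ⟨2, Sig2.R a, args⟩ :=
        congrArg (fun f => (⟨2, Sig2.R a, f⟩ : RelAtom (L2 A) ℕ)) e
      rw [e']; exact h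
  | Q => exact absurd rfl (hφ _ h args)

lemma st_sat {φ : List (RelAtom (L2 A) ℕ)}
    (hbot : ¬ ∃ y₁ y₂ z, Qrel φ y₁ y₂ z ∧ atomI2 y₂ ∈ φ ∧ atomT2 z ∈ φ ∧
      atomF2 y₁ z ∈ φ ∧ atomE2 y₂ z ∈ φ) :
    @Satisfies (L2 A) (Phi2 A) ℕ (st φ) := by
  rintro c hc v hp
  rcases hc with ⟨a, hc | hc⟩ | hc <;> subst hc
  · have hI := hp (atomI2 1) (by simp)
    have hR := hp (atomR2 a 1 2) (by simp)
    have hF := hp (atomF2 0 2) (by simp)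
    have hE := hp (atomE2 1 2) (by simp)
    simp only [realize_st, relInterp, Function.comp_apply, atomI2, atomR2, atomF2, atomE2,
      Matrix.cons_val_zero, Matrix.cons_val_one, Matrix.head_cons] at hI hR hF hE
    show Qrel φ (v 0) (v 1) (v 2)
    exact Qrel.base a _ _ _ hI hR hF hE
  · have hI := hp (atomI2 1) (by simp)
    have hQ := hp (atomQ2 0 1 2) (by simp)
    have hR := hp (atomR2 a 2 3) (by simp)
    have hF2 := hp (atomF2 0 2) (by simp)
    have hF3 := hp (atomF2 0 3) (by simp)
    have hE2 := hp (atomE2 1 2) (by simp)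
    have hE3 := hp (atomE2 1 3) (by simp)
    simp only [realize_st, relInterp, Function.comp_apply, atomI2, atomR2, atomF2, atomE2,
      atomQ2, Matrix.cons_val_zero, Matrix.cons_val_one, Matrix.head_cons,
      Matrix.cons_val_two, Matrix.tail_cons] at hI hQ hR hF2 hF3 hE2 hE3
    show Qrel φ (v 0) (v 1) (v 3)
    exact Qrel.step a _ _ _ _ hQ hI hR hF2 hF3 hE2 hE3
  · have hI := hp (atomI2 1) (by simp)
    have hQ := hp (atomQ2 0 1 2) (by simp)
    have hT := hp (atomT2 2) (by simp)
    have hF := hp (atomF2 0 2) (by simp)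
    have hE := hp (atomE2 1 2) (by simp)
    simp only [realize_st, relInterp, Function.comp_apply, atomI2, atomT2, atomF2, atomE2,
      atomQ2, Matrix.cons_val_zero, Matrix.cons_val_one, Matrix.head_cons,
      Matrix.cons_val_two, Matrix.tail_cons] at hI hQ hT hF hE
    exact hbot ⟨v 0, v 1, v 2, hQ, hI, hT, hF, hE⟩

section AbstractModel

variable {M : Type} [(L2 A).Structure M]

lemma realI (v : ℕ → M) (u : ℕ) :
    (atomI2 (A := A) u).Realize v ↔ Structure.RelMap (L := L2 A) Sig2.I (fun _ => v u) :=
  Iff.rfl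

lemma realT (v : ℕ → M) (u : ℕ) :
    (atomT2 (A := A) u).Realize v ↔ Structure.RelMap (L := L2 A) Sig2.T (fun _ => v u) :=
  Iff.rfl

lemma comp2 (v : ℕ → M) (u w : ℕ) : v ∘ ![u, w] = ![v u, v w] :=
  funext fun i => by fin_cases i <;> rfl

lemma comp3 (v : ℕ → M) (u w t : ℕ) : v ∘ ![u, w, t] = ![v u, v w, v t] :=
  funext fun i => by fin_cases i <;> rfl

lemma realE (v : ℕ → M) (u w : ℕ) :
    (atomE2 (A := A) u w).Realize v ↔ Structure.RelMap (L := L2 A) Sig2.E ![v u, v w] := by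
  unfold atomE2 RelAtom.Realize; rw [comp2]

lemma realF (v : ℕ → M) (u w : ℕ) :
    (atomF2 (A := A) u w).Realize v ↔ Structure.RelMap (L := L2 A) Sig2.F ![v u, v w] := by
  unfold atomF2 RelAtom.Realize; rw [comp2]

lemma realR (v : ℕ → M) (a : A) (u w : ℕ) :
    (atomR2 a u w).Realize v ↔ Structure.RelMap (L := L2 A) (Sig2.R a) ![v u, v w] := by
  unfold atomR2 RelAtom.Realize; rw [comp2]

lemma realQ (v : ℕ → M) (u w t : ℕ) :
    (atomQ2 (A := A) u w t).Realize v ↔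
      Structure.RelMap (L := L2 A) Sig2.Q ![v u, v w, v t] := by
  unfold atomQ2 RelAtom.Realize; rw [comp3]

lemma sat_base (hS : Satisfies (Phi2 A) M) (a : A) (m0 m1 m2 : M)
    (hI : Structure.RelMap (L := L2 A) Sig2.I (fun _ => m1))
    (hR : Structure.RelMap (L := L2 A) (Sig2.R a) ![m1, m2])
    (hF : Structure.RelMap (L := L2 A) Sig2.F ![m0, m2])
    (hE : Structure.RelMap (L := L2 A) Sig2.E ![m1, m2]) :
    Structure.RelMap (L := L2 A) Sig2.Q ![m0, m1, m2] := by
  set w : ℕ → M := fun k => if k = 0 then m0 else if k = 1 then m1 else m2 with hw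
  have h := hS _ (Or.inl ⟨a, Or.inl rfl⟩) w
  have h' := h ?_
  · exact (realQ w 0 1 2).1 h'
  · intro at' hat'
    simp only [List.mem_cons, List.not_mem_nil, or_false] at hat'
    rcases hat' with rfl | rfl | rfl | rfl
    · exact (realI w 1).2 hI
    · exact (realR w a 1 2).2 hR
    · exact (realF w 0 2).2 hF
    · exact (realE w 1 2).2 hE

lemma sat_step (hS : Satisfies (Phi2 A) M) (a : A) (m0 m1 m2 m3 : M)
    (hI : Structure.RelMap (L := L2 A) Sig2.I (fun _ => m1))
    (hQ : Structure.RelMap (L := L2 A) Sig2.Q ![m0, m1, m2])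
    (hR : Structure.RelMap (L := L2 A) (Sig2.R a) ![m2, m3])
    (hF2 : Structure.RelMap (L := L2 A) Sig2.F ![m0, m2])
    (hF3 : Structure.RelMap (L := L2 A) Sig2.F ![m0, m3])
    (hE2 : Structure.RelMap (L := L2 A) Sig2.E ![m1, m2])
    (hE3 : Structure.RelMap (L := L2 A) Sig2.E ![m1, m3]) :
    Structure.RelMap (L := L2 A) Sig2.Q ![m0, m1, m3] := by
  set w : ℕ → M := fun k => if k = 0 then m0 else if k = 1 then m1 else if k = 2 then m2 else m3
    with hw
  have h := hS _ (Or.inl ⟨a, Or.inr rfl⟩) w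
  have h' := h ?_
  · exact (realQ w 0 1 3).1 h'
  · intro at' hat'
    simp only [List.mem_cons, List.not_mem_nil, or_false] at hat'
    rcases hat' with rfl | rfl | rfl | rfl | rfl | rfl | rfl
    · exact (realI w 1).2 hI
    · exact (realQ w 0 1 2).2 hQ
    · exact (realR w a 2 3).2 hR
    · exact (realF w 0 2).2 hF2
    · exact (realF w 0 3).2 hF3
    · exact (realE w 1 2).2 hE2
    · exact (realE w 1 3).2 hE3

lemma sat_bot (hS : Satisfies (Phi2 A) M) (m0 m1 m2 : M)
    (hI : Structure.RelMap (L := L2 A) Sig2.I (fun _ => m1))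
    (hQ : Structure.RelMap (L := L2 A) Sig2.Q ![m0, m1, m2])
    (hT : Structure.RelMap (L := L2 A) Sig2.T (fun _ => m2))
    (hF : Structure.RelMap (L := L2 A) Sig2.F ![m0, m2])
    (hE : Structure.RelMap (L := L2 A) Sig2.E ![m1, m2]) : False := by
  set w : ℕ → M := fun k => if k = 0 then m0 else if k = 1 then m1 else m2 with hw
  have h := hS _ (Or.inr rfl) w
  apply h
  intro at' hat'
  simp only [List.mem_cons, List.not_mem_nil, or_false] at hat'
  rcases hat' with rfl | rfl | rfl | rfl | rfl
  · exact (realI w 1).2 hI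
  · exact (realQ w 0 1 2).2 hQ
  · exact (realT w 2).2 hT
  · exact (realF w 0 2).2 hF
  · exact (realE w 1 2).2 hE

end AbstractModel

end Claim2Aux
theorem claim2 [Finite A] (φ : List (RelAtom (L2 A) ℕ))
    (hφ : ∀ at' ∈ φ, ∀ args : Fin 3 → ℕ, at' ≠ ⟨3, Sig2.Q, args⟩) :
    Entails (Phi2 A) φ none ↔
      ∃ (n : ℕ) (a : Fin (n + 1) → A) (y₁ y₂ : ℕ) (x : Fin (n + 1) → ℕ),
        atomI2 y₂ ∈ φ ∧
        atomR2 (a 0) y₂ (x 0) ∈ φ ∧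
        (∀ i, atomF2 y₁ (x i) ∈ φ) ∧
        (∀ i, atomE2 y₂ (x i) ∈ φ) ∧
        atomT2 (x (Fin.last n)) ∈ φ ∧
        (∀ i : Fin n, atomR2 (a i.succ) (x i.castSucc) (x i.succ) ∈ φ) := by
  constructor
  · intro h
    by_cases hc : ∃ y₁ y₂ z, Qrel φ y₁ y₂ z ∧ atomI2 y₂ ∈ φ ∧ atomT2 z ∈ φ ∧
        atomF2 y₁ z ∈ φ ∧ atomE2 y₂ z ∈ φ
    · obtain ⟨y₁, y₂, z, hQ, hI, hT, hF, hE⟩ := hc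
      obtain ⟨n, as, xs, hlast, hR0, hFs, hEs, hch⟩ := hQ.extract
      exact ⟨n, as, y₁, y₂, xs, hI, hR0, hFs, hEs, by rw [hlast]; exact hT, hch⟩
    · letI := st φ
      exact absurd (h ℕ (st_sat hc) id (realize_self hφ)) not_false
  · rintro ⟨n, a, y₁, y₂, x, hI, hR0, hF, hE, hT, hchain⟩
    intro M strM hS v hprem
    have hIm := (realI v y₂).1 (hprem _ hI)
    have key : ∀ i : Fin (n + 1), Structure.RelMap (L := L2 A) Sig2.Q ![v y₁, v y₂, v (x i)] := by
      intro i
      induction i using Fin.induction with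
      | zero =>
          exact sat_base hS (a 0) _ _ _ hIm ((realR v (a 0) y₂ (x 0)).1 (hprem _ hR0))
            ((realF v y₁ (x 0)).1 (hprem _ (hF 0))) ((realE v y₂ (x 0)).1 (hprem _ (hE 0)))
      | succ j ihj =>
          exact sat_step hS (a j.succ) _ _ _ _ hIm ihj
            ((realR v (a j.succ) (x j.castSucc) (x j.succ)).1 (hprem _ (hchain j)))
            ((realF v y₁ (x j.castSucc)).1 (hprem _ (hF j.castSucc)))
            ((realF v y₁ (x j.succ)).1 (hprem _ (hF j.succ)))
            ((realE v y₂ (x j.castSucc)).1 (hprem _ (hE j.castSucc)))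
            ((realE v y₂ (x j.succ)).1 (hprem _ (hE j.succ)))
    exact sat_bot hS _ _ _ hIm (key (Fin.last n)) ((realT v (x (Fin.last n))).1 (hprem _ hT))
      ((realF v y₁ (x (Fin.last n))).1 (hprem _ (hF _)))
      ((realE v y₂ (x (Fin.last n))).1 (hprem _ (hE _)))

end AmalgamationHard
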